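/- For a closed walk from the origin (located on the first cross-aisle) in the warehouse grid that visits aisle a_min as its westmost aisle and aisle a_max as its eastmost aisle within block 1, the total distance travelled in cross-aisle edges of the first cross-aisle and in origin-connection edges is at least d(0,a_min) + d(a_max,0) + (d(1,a_max) − d(1,a_min)), where d(1,a) denotes the horizontal distance from aisle 1 to aisle a. -/
import Mathlib


/-- Grid vertices: `none` is the origin, `some (r, a)` is the vertex on
cross-aisle `r` at aisle `a`. -/
abbrev WVertex : Type := Option (ℕ × ℕ)

/-- Horizontal coordinate of a vertex: the origin (at the northwest corner, on
the first cross-aisle) has abscissa `ox`, and a grid vertex in aisle `a` has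
abscissa `hx a`; `hx a - hx 0` is the horizontal distance `d(1,a)` from aisle 1
to aisle `a`, identical across cross-aisles. -/
def xcoord (hx : ℕ → ℝ) (ox : ℝ) : WVertex → ℝ
  | none => ox
  | some (_, a) => hx a

/-- One step in a warehouse with `WA` aisles and `WB` blocks: an aisle edge, a
cross-aisle edge, or an edge joining the origin to the first cross-aisle. -/
def wstep (WA WB : ℕ) (v w : WVertex) : Prop :=
  (∃ r a, r + 1 ≤ WB ∧ a < WA ∧
      ((v = some (r, a) ∧ w = some (r + 1, a)) ∨
        (w = some (r, a) ∧ v = some (r + 1, a)))) ∨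
  (∃ r a, r ≤ WB ∧ a + 1 < WA ∧
      ((v = some (r, a) ∧ w = some (r, a + 1)) ∨
        (w = some (r, a) ∧ v = some (r, a + 1)))) ∨
  (∃ a, a < WA ∧ ((v = none ∧ w = some (0, a)) ∨ (w = none ∧ v = some (0, a))))

/-- Total horizontal travel of a walk: the distance travelled in cross-aisle
edges and origin-connection edges (aisle edges contribute zero since they are
vertical). -/
def whoriz (hx : ℕ → ℝ) (ox : ℝ) (walk : List WVertex) : ℝ :=
  ((walk.zip walk.tail).map
    (fun p => |xcoord hx ox p.1 - xcoord hx ox p.2|)).sum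

/-- The walk traverses (in either direction) the subaisle edge of aisle `a`
in block `r`. -/
def wtraverses (walk : List WVertex) (r a : ℕ) : Prop :=
  (some (r, a), some (r + 1, a)) ∈ walk.zip walk.tail ∨
    (some (r + 1, a), some (r, a)) ∈ walk.zip walk.tail

section
variable {α : Type*} (f : α → ℝ)

lemma tvA : ∀ (l : List α) (a b : α), l.head? = some a → l.getLast? = some b →
    |f a - f b| ≤ ((l.zip l.tail).map (fun p => |f p.1 - f p.2|)).sum := by
  intro l
  induction l with
  | nil => intro a b h; simp at h
  | cons x t ih =>
    intro a b ha hb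
    simp at ha; subst ha
    cases t with
    | nil =>
      simp [List.getLast?] at hb ⊢
      subst hb; simp
    | cons y t' =>
      have hb' : (y :: t').getLast? = some b := by
        simpa [List.getLast?_cons_cons] using hb
      have := ih y b rfl hb'
      have tri : |f x - f b| ≤ |f x - f y| + |f y - f b| := abs_sub_le _ _ _
      simp only [List.tail_cons, List.zip_cons_cons, List.map_cons, List.sum_cons] at *
      calc |f x - f b| ≤ |f x - f y| + |f y - f b| := tri
        _ ≤ _ := by linarith

lemma tvC : ∀ (l : List α) (a b v : α), l.head? = some a → l.getLast? = some b →
    v ∈ l →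
    |f a - f v| + |f v - f b| ≤ ((l.zip l.tail).map (fun p => |f p.1 - f p.2|)).sum := by
  intro l
  induction l with
  | nil => intro a b v h; simp at h
  | cons x t ih =>
    intro a b v ha hb hv
    simp at ha; subst ha
    rcases List.mem_cons.mp hv with rfl | hv'
    · have := tvA f (v :: t) v b rfl hb
      simpa using this
    cases t with
    | nil => simp at hv'
    | cons y t' =>
      have hb' : (y :: t').getLast? = some b := by
        simpa [List.getLast?_cons_cons] using hb
      have := ih y b v rfl hb' hv'
      have tri : |f x - f v| ≤ |f x - f y| + |f y - f v| := abs_sub_le _ _ _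
      simp only [List.tail_cons, List.zip_cons_cons, List.map_cons, List.sum_cons] at *
      linarith

end

/-- For a closed walk from the origin whose westmost and eastmost aisles with
block-1 subaisles used are `aMin` and `aMax`, the total distance travelled in
cross-aisle and origin-connection edges is at least
`d(0,aMin) + d(aMax,0) + (d(1,aMax) − d(1,aMin))`, where `d(0,a) = hx a - ox`
is the horizontal distance from the origin to aisle `a` and
`d(1,aMax) − d(1,aMin) = hx aMax − hx aMin`. -/




theorem stmt_9 (WA WB : ℕ) (hx : ℕ → ℝ) (ox : ℝ)
    (hmono : Monotone hx) (hox : ox ≤ hx 0)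
    (walk : List WVertex)
    (hchain : walk.Chain' (wstep WA WB))
    (hhead : walk.head? = some none) (hlast : walk.getLast? = some none)
    (aMin aMax : ℕ)
    (hF : wtraverses walk 0 aMin) (hL : wtraverses walk 0 aMax)
    (hext : ∀ a, wtraverses walk 0 a → aMin ≤ a ∧ a ≤ aMax) :
    (hx aMin - ox) + (hx aMax - ox) + (hx aMax - hx aMin)
      ≤ whoriz hx ox walk := by
  obtain ⟨v, hvmem, hvx⟩ : ∃ v, v ∈ walk ∧ xcoord hx ox v = hx aMax := by
    rcases hL with h | h
    · exact ⟨some (0, aMax), (List.of_mem_zip h).1, rfl⟩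
    · exact ⟨some (0 + 1, aMax), (List.of_mem_zip h).1, rfl⟩
  have key := tvC (xcoord hx ox) walk none none v hhead hlast hvmem
  rw [hvx] at key
  have h1 : hx aMax - ox ≤ |hx aMax - ox| := le_abs_self _
  have h2 : |xcoord hx ox none - hx aMax| = |hx aMax - ox| := by
    rw [show xcoord hx ox none = ox from rfl, abs_sub_comm]
  have h3 : |hx aMax - xcoord hx ox none| = |hx aMax - ox| := rfl
  rw [h2, h3] at key
  have h4 : hx 0 ≤ hx aMax := hmono (Nat.zero_le _)
  unfold whoriz
  linarith
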